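/- arXiv:1905.02358 — 4 statements merged into one kernel-verified Lean document; each statement's English description precedes it below -/
import Mathlib

section
/- Let σ be a finite sequence of updates (i, Δ) ∈ [n] × ℤ, and for t ≤ len(σ) let x^(t) denote the partial sum vector (frequency of the first t updates). Suppose every partial state satisfies |x^(t)_i| ≤ 2M−1 for all coordinates i, and the final vector x satisfies x_i ∈ {−M, M} for all i. If for some coordinate i and some split σ = σ₁·σ₂ we have min over t of (freq σ₂^(t))_i ≤ (freq σ₂)_i − M, then x_i = M. -/
/-- The frequency vector of a stream: coordinatewise sum of updates. -/
def freq {n : ℕ} (σ : List (Fin n × ℤ)) : Fin n → ℤ :=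
  fun i => (σ.map fun u => if u.1 = i then u.2 else 0).sum

lemma freq_append {n : ℕ} (a b : List (Fin n × ℤ)) (i : Fin n) :
    freq (a ++ b) i = freq a i + freq b i := by
  simp [freq]

lemma exists_take_freq_le_of_suffix {n : ℕ} (δ : ℤ) (σ₁ σ₂ : List (Fin n × ℤ)) (i : Fin n)
    (hdip : ∃ t ≤ σ₂.length, freq (σ₂.take t) i ≤ freq σ₂ i - δ) :
    ∃ s ≤ (σ₁ ++ σ₂).length, freq ((σ₁ ++ σ₂).take s) i ≤ freq (σ₁ ++ σ₂) i - δ := by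
  obtain ⟨t, ht, hle⟩ := hdip
  refine ⟨σ₁.length + t, by simpa using ht, ?_⟩
  rw [List.take_length_add_append, freq_append, freq_append]
  linarith

theorem statement0_general {n : ℕ} (M : ℤ) (σ₁ σ₂ : List (Fin n × ℤ))
    (hbox : ∀ t ≤ (σ₁ ++ σ₂).length, ∀ j : Fin n,
      |freq ((σ₁ ++ σ₂).take t) j| ≤ 2 * M - 1)
    (hfin : ∀ j : Fin n, freq (σ₁ ++ σ₂) j = -M ∨ freq (σ₁ ++ σ₂) j = M)
    (i : Fin n)
    (hmin : ∃ t ≤ σ₂.length, freq (σ₂.take t) i ≤ freq σ₂ i - M) :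
    freq (σ₁ ++ σ₂) i = M := by
  obtain ⟨s, hs, hdip⟩ := exists_take_freq_le_of_suffix M σ₁ σ₂ i hmin
  refine (hfin i).resolve_left fun hneg => ?_
  -- the prefix would reach `-M - M = -2M`, outside the box `[-(2M-1), 2M-1]`
  have hlow := (abs_le.mp (hbox s hs i)).1
  linarith

/-- If every partial state of the stream `σ₁ ++ σ₂` lies in `[-(2M-1), 2M-1]ⁿ`,
the final vector lies in `{-M, M}ⁿ`, and for some coordinate `i` the running value of
`σ₂` at coordinate `i` dips at least `M` below its final value, then the final value of
coordinate `i` is `M`. -/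
theorem statement0 {n : ℕ} (M : ℤ) (hM : 1 ≤ M) (σ₁ σ₂ : List (Fin n × ℤ))
    (hbox : ∀ t ≤ (σ₁ ++ σ₂).length, ∀ j : Fin n,
      |freq ((σ₁ ++ σ₂).take t) j| ≤ 2 * M - 1)
    (hfin : ∀ j : Fin n, freq (σ₁ ++ σ₂) j = -M ∨ freq (σ₁ ++ σ₂) j = M)
    (i : Fin n)
    (hmin : ∃ t ≤ σ₂.length, freq (σ₂.take t) i ≤ freq σ₂ i - M) :
    freq (σ₁ ++ σ₂) i = M :=
  statement0_general M σ₁ σ₂ hbox hfin i hmin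
end

section
/- Let σ = σ₁·σ₂ be a stream over ℤⁿ whose partial states stay in [−(2M−1), 2M−1]ⁿ and whose final vector x lies in {−M, M}ⁿ, and let ζ(z)_i = M if z_i > 0, −M if z_i < 0, and 0 if z_i = 0. Then for any coordinate i: (min_t (freq σ₂^(t))_i ≤ (freq σ₂)_i − M or max_t (freq σ₂^(t))_i ≥ (freq σ₂)_i + M) if and only if there exists t such that ζ(freq σ₁·σ₂^(t))_i ≠ ζ(x)_i. -/
/-- The error-correction function ζ rounding each coordinate to `M` times its sign. -/
def zeta {n : ℕ} (M : ℤ) (z : Fin n → ℤ) : Fin n → ℤ :=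
  fun i => if 0 < z i then M else if z i < 0 then -M else 0

/-- Decoding lemma: for a stream `σ₁ ++ σ₂` whose partial states stay within
`[-(2M-1), 2M-1]ⁿ` and whose final vector is in `{-M, M}ⁿ`, the running value of `σ₂` at
coordinate `i` dips `M` below or rises `M` above its final value iff there is a time `t`
(within `σ₂`) at which `ζ` of the partial state disagrees with `ζ` of the final state at
coordinate `i`. -/
theorem statement2 {n : ℕ} (M : ℤ) (hM : 1 ≤ M) (σ₁ σ₂ : List (Fin n × ℤ))
    (hbox : ∀ t ≤ (σ₁ ++ σ₂).length, ∀ j : Fin n,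
      |freq ((σ₁ ++ σ₂).take t) j| ≤ 2 * M - 1)
    (hfin : ∀ j : Fin n, freq (σ₁ ++ σ₂) j = -M ∨ freq (σ₁ ++ σ₂) j = M)
    (i : Fin n) :
    ((∃ t ≤ σ₂.length, freq (σ₂.take t) i ≤ freq σ₂ i - M) ∨
      (∃ t ≤ σ₂.length, freq σ₂ i + M ≤ freq (σ₂.take t) i)) ↔
    ∃ t ≤ σ₂.length, zeta M (freq (σ₁ ++ σ₂.take t)) i ≠ zeta M (freq (σ₁ ++ σ₂)) i := by

  have hfa : ∀ l : List (Fin n × ℤ), freq (σ₁ ++ l) i = freq σ₁ i + freq l i := by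
    intro l; simp [freq]
  have hx := hfin i
  rw [hfa] at hx
  have key : ∀ t ≤ σ₂.length,
      ((freq (σ₂.take t) i ≤ freq σ₂ i - M ∨ freq σ₂ i + M ≤ freq (σ₂.take t) i) ↔
        zeta M (freq (σ₁ ++ σ₂.take t)) i ≠ zeta M (freq (σ₁ ++ σ₂)) i) := by
    intro t ht
    have hb : |freq σ₁ i + freq (σ₂.take t) i| ≤ 2 * M - 1 := by
      have h := hbox (σ₁.length + t) (by simp [Nat.add_le_add_left ht]) i
      rwa [List.take_length_add_append (i := t), hfa] at h
    rw [abs_le] at hb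
    simp only [zeta, hfa]
    rcases hx with h | h <;> rw [h] <;> split_ifs <;> omega
  constructor
  · rintro (⟨t, ht, h'⟩ | ⟨t, ht, h'⟩)
    exacts [⟨t, ht, (key t ht).mp (Or.inl h')⟩, ⟨t, ht, (key t ht).mp (Or.inr h')⟩]
  · rintro ⟨t, ht, h'⟩
    rcases (key t ht).mpr h' with h | h
    exacts [Or.inl ⟨t, ht, h⟩, Or.inr ⟨t, ht, h⟩]
end

section
/- With φ : ℤⁿ → M defined recursively via moduli (a_i) and overflow vectors (o_i), the map φ preserves addition: for all x, y ∈ ℤⁿ, φ(x + y) = φ(φ(x) + φ(y)). -/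
/-!
Let `L` be the lattice spanned by the vectors `vᵢ = aᵢ eᵢ - oᵢ`. One step of the recursion replaces
`r eᵢ` by `(r mod aᵢ) eᵢ + ⌊r / aᵢ⌋ oᵢ`, i.e. subtracts `⌊r / aᵢ⌋ vᵢ`; hence `φ z ≡ z (mod L)` and
`φ z` lies in the box `∏ [0, aᵢ)`. Since `oᵢ` lives below coordinate `i`, the `vᵢ` form a triangular
system with diagonal `aᵢ`, so no nonzero vector of `L` has `|dᵢ| < aᵢ` for all `i`: the box meets each
coset of `L` at most once. Both `φ (x + y)` and `φ (φ x + φ y)` are box points congruent to `x + y`.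
-/

open Finset

section Lattice

variable {ι : Type*} [Fintype ι] [LinearOrder ι]

def carryLattice (a : ι → ℤ) (o : ι → ι → ℤ) : Submodule ℤ (ι → ℤ) :=
  Submodule.span ℤ (Set.range fun i => a i • Pi.single i 1 - o i)

theorem eq_zero_of_mem_carryLattice {a : ι → ℤ} {o : ι → ι → ℤ}
    (ho : ∀ i j, i ≤ j → o i j = 0) {d : ι → ℤ} (hd : d ∈ carryLattice a o)
    (hlt : ∀ i, |d i| < a i) : d = 0 := by
  obtain ⟨c, rfl⟩ := (Submodule.mem_span_range_iff_exists_fun ℤ).1 hd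
  by_contra hne
  obtain ⟨i₀, hi₀⟩ : ∃ i, c i ≠ 0 := by
    by_contra! hc
    exact hne (by simp [hc])
  obtain ⟨i, hi, hmax⟩ := (univ.filter (c · ≠ 0)).exists_max_image id ⟨i₀, by simpa using hi₀⟩
  have hci : c i ≠ 0 := by simpa using hi
  -- `i` is the top of the support of `c`, and `vⱼ` vanishes at every coordinate `≥ j` but `j`.
  have hcoord : (∑ j, c j • (a j • Pi.single j 1 - o j) : ι → ℤ) i = c i * a i := by
    rw [Finset.sum_apply, Finset.sum_eq_single i]
    · simp [ho i i le_rfl]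
    · intro j _ hji
      by_cases hcj : c j = 0
      · simp [hcj]
      · have hji' : j < i := lt_of_le_of_ne (hmax j (by simpa using hcj)) hji
        simp [hji'.ne', ho j i hji'.le]
    · simp
  have hbound := hlt i
  rw [hcoord, abs_mul] at hbound
  have : |a i| ≤ |c i| * |a i| := le_mul_of_one_le_left (abs_nonneg _) (Int.one_le_abs hci)
  linarith [le_abs_self (a i)]

end Lattice

structure IsCarryMap {n : ℕ} (a : Fin n → ℤ) (o : Fin n → Fin n → ℤ)
    (φ : (Fin n → ℤ) → (Fin n → ℤ)) : Prop where
  map_zero : φ 0 = 0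
  map_add_smul_single : ∀ (i : Fin n) (x : Fin n → ℤ) (r : ℤ), (∀ j, i ≤ j → x j = 0) →
    φ (x + r • Pi.single i 1) = (r % a i) • Pi.single i 1 + φ (x + (r / a i) • o i)

namespace IsCarryMap

variable {n : ℕ} {a : Fin n → ℤ} {o : Fin n → Fin n → ℤ} {φ : (Fin n → ℤ) → (Fin n → ℤ)}

theorem apply_of_forall_gt_eq_zero (hφ : IsCarryMap a o φ) {i : Fin n} {z : Fin n → ℤ}
    (hz : ∀ j, i < j → z j = 0) :
    φ z = (z i % a i) • Pi.single i 1 + φ (Function.update z i 0 + (z i / a i) • o i) := by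
  have hsplit : Function.update z i 0 + z i • Pi.single i 1 = z := by
    ext j
    rcases eq_or_ne j i with rfl | hji <;> simp [*]
  have hx : ∀ j, i ≤ j → Function.update z i 0 j = 0 := by
    intro j hj
    rcases hj.eq_or_lt with rfl | hij
    · simp
    · simp [Function.update_of_ne hij.ne', hz j hij]
  conv_lhs => rw [← hsplit]
  exact hφ.map_add_smul_single i _ _ hx

theorem sub_mem_carryLattice_and_mem_box_of_vanish (hφ : IsCarryMap a o φ) (ha : ∀ i, 0 < a i)
    (ho : ∀ i j, i ≤ j → o i j = 0) (k : ℕ) {z : Fin n → ℤ} (hz : ∀ j : Fin n, k ≤ j → z j = 0) :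
    φ z - z ∈ carryLattice a o ∧ (∀ j, φ z j ∈ Set.Ico 0 (a j)) ∧
      ∀ j : Fin n, k ≤ j → φ z j = 0 := by
  induction k generalizing z with
  | zero =>
    obtain rfl : z = 0 := funext fun j => hz j (Nat.zero_le _)
    simp [hφ.map_zero, ha]
  | succ k ih =>
    by_cases hk : k < n
    swap
    · obtain ⟨hmem, hbox, hzero⟩ := ih fun j hj => hz j (by omega)
      exact ⟨hmem, hbox, fun j hj => hzero j (by omega)⟩
    set i : Fin n := ⟨k, hk⟩
    set w := Function.update z i 0 + (z i / a i) • o i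
    have hw : ∀ j : Fin n, k ≤ j → w j = 0 := by
      intro j hj
      have hij : i ≤ j := hj
      rcases hij.eq_or_lt with rfl | hij
      · simp [w, ho i i le_rfl]
      · simp [w, Function.update_of_ne hij.ne', hz j hij, ho i j hij.le]
    obtain ⟨hmem, hbox, hzero⟩ := ih hw
    have hφz : φ z = (z i % a i) • Pi.single i 1 + φ w := hφ.apply_of_forall_gt_eq_zero hz
    refine ⟨?_, fun j => ?_, fun j hj => ?_⟩
    · have hstep : φ z - z = (φ w - w) - (z i / a i) • (a i • Pi.single i 1 - o i) := by
        rw [hφz]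
        ext j
        rcases eq_or_ne j i with rfl | hji
        · simp [w, Int.emod_def]
          ring
        · simp [w, hji]
          ring
      rw [hstep]
      exact sub_mem hmem (Submodule.smul_mem _ _ (Submodule.subset_span ⟨i, rfl⟩))
    · rw [hφz]
      rcases eq_or_ne j i with rfl | hji
      · simp [hzero i le_rfl, Int.emod_nonneg _ (ha i).ne', Int.emod_lt_of_pos _ (ha i)]
      · simpa [hji] using hbox j
    · have hji : j ≠ i := fun h => by simp [h, i] at hj
      simp [hφz, hji, hzero j (by omega)]

theorem sub_mem_carryLattice_and_mem_box (hφ : IsCarryMap a o φ) (ha : ∀ i, 0 < a i)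
    (ho : ∀ i j, i ≤ j → o i j = 0) (z : Fin n → ℤ) :
    φ z - z ∈ carryLattice a o ∧ ∀ j, φ z j ∈ Set.Ico 0 (a j) :=
  (hφ.sub_mem_carryLattice_and_mem_box_of_vanish ha ho n fun j hj => absurd j.isLt hj.not_gt).imp_right
    And.left

end IsCarryMap

theorem statement8_general {n : ℕ} (a : Fin n → ℤ) (ha : ∀ i, 0 < a i)
    (o : Fin n → Fin n → ℤ)
    (ho_supp : ∀ i j, i ≤ j → o i j = 0)
    (φ : (Fin n → ℤ) → (Fin n → ℤ))
    (hφ0 : φ 0 = 0)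
    (hφrec : ∀ (i : Fin n) (x : Fin n → ℤ) (r : ℤ), (∀ j, i ≤ j → x j = 0) →
      φ (x + r • Pi.single i 1) =
        (r % a i) • Pi.single i 1 + φ (x + (r / a i) • o i)) :
    ∀ x y : Fin n → ℤ, φ (x + y) = φ (φ x + φ y) := by
  have hred := (IsCarryMap.mk hφ0 hφrec).sub_mem_carryLattice_and_mem_box ha ho_supp
  intro x y
  rw [← sub_eq_zero]
  refine eq_zero_of_mem_carryLattice (a := a) ho_supp ?_ fun i => ?_
  · have hdecomp : φ (x + y) - φ (φ x + φ y) =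
        (φ (x + y) - (x + y)) - (φ (φ x + φ y) - (φ x + φ y)) - (φ x - x) - (φ y - y) := by
      abel
    rw [hdecomp]
    exact sub_mem (sub_mem (sub_mem (hred _).1 (hred _).1) (hred x).1) (hred y).1
  · obtain ⟨h₁, h₂⟩ := (hred (x + y)).2 i
    obtain ⟨h₃, h₄⟩ := (hred (φ x + φ y)).2 i
    exact abs_sub_lt_of_nonneg_of_lt h₁ h₂ h₃ h₄

/-- The recursively defined sketch map `φ` preserves addition:
`φ(x + y) = φ(φ(x) + φ(y))`. -/
theorem statement8 {n : ℕ} (a : Fin n → ℤ) (ha : ∀ i, 0 < a i)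
    (o : Fin n → Fin n → ℤ)
    (ho_supp : ∀ i j, i ≤ j → o i j = 0)
    (ho_range : ∀ i j, j < i → 0 ≤ o i j ∧ o i j < a j)
    (φ : (Fin n → ℤ) → (Fin n → ℤ))
    (hφ0 : φ 0 = 0)
    (hφrec : ∀ (i : Fin n) (x : Fin n → ℤ) (r : ℤ), (∀ j, i ≤ j → x j = 0) →
      φ (x + r • Pi.single i 1) =
        (r % a i) • Pi.single i 1 + φ (x + (r / a i) • o i)) :
    ∀ x y : Fin n → ℤ, φ (x + y) = φ (φ x + φ y) :=
  statement8_general a ha o ho_supp φ hφ0 hφrec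
end

section
/- With φ as above, the following 'quotient invariance' holds: for any index i and any z ∈ ℤⁿ with z_i ≥ a_i, φ(z + o_i − a_i·e_i) = φ(z). Hence Algorithm repeatedly replacing z by z + o_i − a_i·e_i (for the least i with z_i ≥ a_i) returns φ(x) when started at x ∈ ℕⁿ, upon termination. -/
/-!
Write `z = x + z_m e_m` with `m` the top coordinate of `z`. The recursion for `φ` at
coordinate `m` only passes `x` plus a multiple of `o_m` down to lower coordinates, so a
perturbation supported below `m` can be carried through it unchanged. Hence it suffices to
check the invariance for `z` supported on coordinates `≤ i`; there lowering `z_i` by `a_i`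
keeps `z_i mod a_i` and lowers the carry `⌊z_i / a_i⌋` by one, which the added `o_i`
restores.
-/

namespace QuotientInvariance

variable {n : ℕ}

def supportedBelow (n k : ℕ) : Submodule ℤ (Fin n → ℤ) where
  carrier := {x | ∀ j : Fin n, k ≤ j → x j = 0}
  add_mem' hx hy j hj := by simp [hx j hj, hy j hj]
  zero_mem' _ _ := rfl
  smul_mem' c _ hx j hj := by simp [hx j hj]

theorem supportedBelow_mono {k l : ℕ} (h : k ≤ l) : supportedBelow n k ≤ supportedBelow n l :=
  fun _ hx j hj => hx j (h.trans hj)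

theorem exists_eq_add_smul_single {m : Fin n} {z : Fin n → ℤ}
    (hz : z ∈ supportedBelow n ((m : ℕ) + 1)) :
    ∃ x ∈ supportedBelow n m, ∃ r : ℤ, z = x + r • Pi.single m 1 := by
  refine ⟨z - z m • Pi.single m 1, fun j hj => ?_, z m, (sub_add_cancel _ _).symm⟩
  rcases (Fin.le_def.mpr hj).eq_or_lt with rfl | hlt
  · simp
  · simp [hz j hlt, hlt.ne']

variable (a : Fin n → ℤ) (o : Fin n → Fin n → ℤ) (φ : (Fin n → ℤ) → (Fin n → ℤ))

def IsCarryMap : Prop :=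
  ∀ (i : Fin n) (x : Fin n → ℤ) (r : ℤ), x ∈ supportedBelow n i →
    φ (x + r • Pi.single i 1) = (r % a i) • Pi.single i 1 + φ (x + (r / a i) • o i)

variable {a o φ}

theorem IsCarryMap.map_add_sub_smul_single_of_mem {i : Fin n} (hφ : IsCarryMap a o φ)
    (ha : a i ≠ 0) (ho : o i ∈ supportedBelow n i) {z : Fin n → ℤ}
    (hz : z ∈ supportedBelow n ((i : ℕ) + 1)) :
    φ (z + o i - a i • Pi.single i 1) = φ z := by
  obtain ⟨x, hx, r, rfl⟩ := exists_eq_add_smul_single hz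
  have hdiv : (r - a i) / a i = r / a i - 1 := by
    rw [Int.sub_ediv_of_dvd _ dvd_rfl, Int.ediv_self ha]
  calc φ (x + r • Pi.single i 1 + o i - a i • Pi.single i 1)
      = φ ((x + o i) + (r - a i) • Pi.single i 1) := by congr 1; module
    _ = (r % a i) • Pi.single i 1 + φ (x + (r / a i) • o i) := by
        rw [hφ i _ _ (add_mem hx ho), Int.sub_emod_right, hdiv]
        congr 2; module
    _ = φ (x + r • Pi.single i 1) := (hφ i x r hx).symm

theorem IsCarryMap.map_add_eq_of_mem_supportedBelow_succ (hφ : IsCarryMap a o φ)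
    (ho : ∀ i : Fin n, o i ∈ supportedBelow n i) {m : ℕ} {d : Fin n → ℤ}
    (hd : d ∈ supportedBelow n m) (h : ∀ z ∈ supportedBelow n m, φ (z + d) = φ z)
    {z : Fin n → ℤ} (hz : z ∈ supportedBelow n (m + 1)) : φ (z + d) = φ z := by
  by_cases hm : m < n
  swap
  · exact h z fun j hj => absurd (j.isLt.trans_le (not_lt.mp hm)) (not_lt.mpr hj)
  obtain ⟨x, hx, r, rfl⟩ := exists_eq_add_smul_single (m := ⟨m, hm⟩) hz
  rw [add_right_comm, hφ _ _ _ (add_mem hx hd), hφ _ x _ hx, add_right_comm x d,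
    h _ (add_mem hx (Submodule.smul_mem _ _ (ho ⟨m, hm⟩)))]

theorem IsCarryMap.map_add_sub_smul_single (hφ : IsCarryMap a o φ) (ha : ∀ i, a i ≠ 0)
    (ho : ∀ i : Fin n, o i ∈ supportedBelow n i) (i : Fin n) (z : Fin n → ℤ) :
    φ (z + o i - a i • Pi.single i 1) = φ z := by
  have hd : o i - a i • Pi.single i 1 ∈ supportedBelow n ((i : ℕ) + 1) := by
    refine sub_mem (fun j hj => ho i j (by omega)) fun j hj => ?_
    simp [show j ≠ i by omega]
  have hlift : ∀ k : ℕ, (i : ℕ) + 1 ≤ k → ∀ z ∈ supportedBelow n k,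
      φ (z + (o i - a i • Pi.single i 1)) = φ z := by
    intro k hk
    induction k, hk using Nat.le_induction with
    | base =>
      intro z hz
      rw [← add_sub_assoc]
      exact hφ.map_add_sub_smul_single_of_mem (ha i) (ho i) hz
    | succ k hk ih =>
      exact fun z hz => hφ.map_add_eq_of_mem_supportedBelow_succ ho
        (supportedBelow_mono hk hd) ih hz
  rw [add_sub_assoc]
  exact hlift n i.isLt z fun j hj => absurd j.isLt (not_lt.mpr hj)

end QuotientInvariance

theorem statement10_general {n : ℕ} (a : Fin n → ℤ) (ha : ∀ i, 0 < a i)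
    (o : Fin n → Fin n → ℤ)
    (ho_supp : ∀ i j, i ≤ j → o i j = 0)
    (φ : (Fin n → ℤ) → (Fin n → ℤ))
    (hφrec : ∀ (i : Fin n) (x : Fin n → ℤ) (r : ℤ), (∀ j, i ≤ j → x j = 0) →
      φ (x + r • Pi.single i 1) =
        (r % a i) • Pi.single i 1 + φ (x + (r / a i) • o i)) :
    ∀ (i : Fin n) (z : Fin n → ℤ), a i ≤ z i →
      φ (z + o i - a i • Pi.single i 1) = φ z :=
  fun i z _ => QuotientInvariance.IsCarryMap.map_add_sub_smul_single hφrec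
    (fun i => (ha i).ne') (fun i j hj => ho_supp i j hj) i z

/-- Quotient invariance of `φ`: subtracting `a_i` from coordinate `i` (when it is at
least `a_i`) and adding the overflow vector `o_i` does not change the sketch value. -/
theorem statement10 {n : ℕ} (a : Fin n → ℤ) (ha : ∀ i, 0 < a i)
    (o : Fin n → Fin n → ℤ)
    (ho_supp : ∀ i j, i ≤ j → o i j = 0)
    (ho_range : ∀ i j, j < i → 0 ≤ o i j ∧ o i j < a j)
    (φ : (Fin n → ℤ) → (Fin n → ℤ))
    (hφ0 : φ 0 = 0)
    (hφrec : ∀ (i : Fin n) (x : Fin n → ℤ) (r : ℤ), (∀ j, i ≤ j → x j = 0) →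
      φ (x + r • Pi.single i 1) =
        (r % a i) • Pi.single i 1 + φ (x + (r / a i) • o i)) :
    ∀ (i : Fin n) (z : Fin n → ℤ), a i ≤ z i →
      φ (z + o i - a i • Pi.single i 1) = φ z :=
  statement10_general a ha o ho_supp φ hφrec
end
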